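/- arXiv:1701.08384 — 6 statements merged into one kernel-verified Lean document; each statement's English description precedes it below -/
import Mathlib

section
/- If 4 divides n and gcd(i - j, n) = 2, then the set {a^{n/2}, a^i·b, a^j·b} does not generate the dihedral group D_{2n}. -/
open SimpleGraph

/-- `W` is a resolving set for `G`. -/
def IsResolving {V : Type*} (G : SimpleGraph V) (W : Set V) : Prop :=
  ∀ u v : V, (∀ w ∈ W, G.dist u w = G.dist v w) → u = v

/-- The metric dimension of `G`: minimum cardinality of a resolving set. -/
noncomputable def metricDim {V : Type*} (G : SimpleGraph V) : ℕ :=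
  sInf {n | ∃ W : Set V, W.ncard = n ∧ IsResolving G W}

/-- The Cayley graph of a group `G` with connection set `S`
(for `S` symmetric and not containing `1`, `u ~ v ↔ u * v⁻¹ ∈ S`). -/
def cayley {G : Type*} [Group G] (S : Set G) : SimpleGraph G :=
  SimpleGraph.fromRel (fun u v => u * v⁻¹ ∈ S)

/-- The rotation `a` in the dihedral group `D_{2n}`. -/
def A (n : ℕ) : DihedralGroup n := DihedralGroup.r 1

/-- The reflection `b` in the dihedral group `D_{2n}`. -/
def B (n : ℕ) : DihedralGroup n := DihedralGroup.sr 0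

/-! For even `n`, reduction mod 2 gives a homomorphism `D_{2n} → ℤ/2` with `a ↦ 1` and `b ↦ c`
for any chosen `c`. Taking `c = i mod 2`, it kills `a^i b`, and also `a^j b` since `i - j` is even;
when `4 ∣ n` it kills `a^{n/2}` too. So the three elements lie in a proper subgroup, the kernel. -/

namespace DihedralGroup

variable {n : ℕ}

def parityHom (hn : 2 ∣ n) (c : ZMod 2) : DihedralGroup n →* Multiplicative (ZMod 2) where
  toFun
    | r k => .ofAdd (ZMod.castHom hn (ZMod 2) k)
    | sr k => .ofAdd (ZMod.castHom hn (ZMod 2) k + c)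
  map_one' := by simp [one_def, -r_zero]
  map_mul' := by
    rintro (k | k) (l | l) <;>
      simp only [r_mul_r, r_mul_sr, sr_mul_r, sr_mul_sr, ← ofAdd_add, map_add, map_sub,
        CharTwo.sub_eq_add] <;>
      congr 1
    · abel
    · abel
    · rw [add_add_add_comm, CharTwo.add_self_eq_zero, add_zero, add_comm]

variable (hn : 2 ∣ n) (c : ZMod 2)

@[simp]
theorem parityHom_r (k : ZMod n) : parityHom hn c (r k) = .ofAdd (ZMod.castHom hn (ZMod 2) k) :=
  rfl

@[simp]
theorem parityHom_sr (k : ZMod n) :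
    parityHom hn c (sr k) = .ofAdd (ZMod.castHom hn (ZMod 2) k + c) :=
  rfl

theorem r_one_notMem_ker_parityHom : r 1 ∉ (parityHom hn c).ker := by
  rw [MonoidHom.mem_ker, parityHom_r, map_one]
  decide

theorem r_natCast_mem_ker_parityHom {m : ℕ} (hm : 2 ∣ m) :
    r (m : ZMod n) ∈ (parityHom hn c).ker := by
  rw [MonoidHom.mem_ker, parityHom_r, map_natCast, (ZMod.natCast_eq_zero_iff m 2).mpr hm]
  rfl

theorem r_one_zpow_mul_sr_zero_mem_ker_parityHom {i : ℤ} (hi : (i : ZMod 2) = c) :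
    r 1 ^ i * sr 0 ∈ (parityHom hn c).ker := by
  rw [MonoidHom.mem_ker, r_one_zpow, r_mul_sr, zero_sub, parityHom_sr, map_neg, map_intCast,
    CharTwo.neg_eq, hi, CharTwo.add_self_eq_zero]
  rfl

end DihedralGroup

open DihedralGroup in
theorem stmt_2_general (n : ℕ) (i j : ℤ) (h4 : 4 ∣ n)
    (hg : Int.gcd (i - j) (n : ℤ) = 2) :
    Subgroup.closure ({A n ^ (n / 2), A n ^ i * B n, A n ^ j * B n} :
      Set (DihedralGroup n)) ≠ ⊤ := by
  have hn : 2 ∣ n := (dvd_mul_left 2 2).trans h4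
  have hji : (j : ZMod 2) = i := by
    rw [ZMod.intCast_eq_intCast_iff_dvd_sub, ← hg]
    exact Int.gcd_dvd_left _ _
  have hle : Subgroup.closure {A n ^ (n / 2), A n ^ i * B n, A n ^ j * B n}
      ≤ (parityHom hn i).ker := by
    rw [Subgroup.closure_le]
    rintro _ (rfl | rfl | rfl)
    · rw [SetLike.mem_coe, A, r_one_pow]
      exact r_natCast_mem_ker_parityHom hn _ (Nat.dvd_div_of_mul_dvd h4)
    · exact r_one_zpow_mul_sr_zero_mem_ker_parityHom hn _ rfl
    · exact r_one_zpow_mul_sr_zero_mem_ker_parityHom hn _ hji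
  intro htop
  exact r_one_notMem_ker_parityHom hn i (hle (htop ▸ Subgroup.mem_top _))

theorem stmt_2 (n : ℕ) (hn : 1 ≤ n) (i j : ℤ) (h4 : 4 ∣ n)
    (hg : Int.gcd (i - j) (n : ℤ) = 2) :
    Subgroup.closure ({A n ^ (n / 2), A n ^ i * B n, A n ^ j * B n} :
      Set (DihedralGroup n)) ≠ ⊤ :=
  stmt_2_general n i j h4 hg
end

section
/- Every connected 3-regular bipartite graph has metric dimension at least 3. -/
open SimpleGraph

/-!
In a connected bipartite graph the distances from a fixed vertex `v` to two adjacent vertices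
differ by exactly one. Hence the three neighbours of a vertex `u` have distances to `v` in the
two-element set `{d(u,v) + 1, d(u,v) - 1}`, so two of them share their distance to `v`; they also
share their distance `1` to `u`. Thus no set contained in `{u, v}` is resolving.
-/

theorem Set.exists_subset_pair_of_ncard_le_two {α : Type*} [Nonempty α] {s : Set α}
    (hs : s.Finite) (h : s.ncard ≤ 2) : ∃ a b : α, s ⊆ {a, b} := by
  rcases Nat.lt_or_eq_of_le h with h | h
  · obtain ⟨a, ha⟩ := (Set.ncard_le_one_iff_subset_singleton hs).mp (by omega)
    exact ⟨a, a, by simpa using ha⟩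
  · obtain ⟨a, b, -, rfl⟩ := Set.ncard_eq_two.mp h
    exact ⟨a, b, subset_rfl⟩

namespace SimpleGraph

variable {V : Type*} {G : SimpleGraph V}

theorem Connected.isResolving_univ (hconn : G.Connected) : IsResolving G Set.univ :=
  fun u v h => hconn.dist_eq_zero_iff.mp (by simpa using h v trivial)

theorem Connected.dist_ne_of_adj (hconn : G.Connected) (hbip : G.Colorable 2) {u t : V}
    (hadj : G.Adj u t) (v : V) : G.dist v t ≠ G.dist v u := by
  obtain ⟨p, hp⟩ := hconn.exists_walk_length_eq_dist v u
  obtain ⟨q, hq⟩ := hconn.exists_walk_length_eq_dist v t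
  -- the closed walk `v ⟶ u ~ t ⟶ v` has odd length if the two distances agree
  have hloop := two_colorable_iff_forall_loop_even.mp hbip v ((p.concat hadj).append q.reverse)
  rw [Walk.length_append, Walk.length_concat, Walk.length_reverse, hp, hq] at hloop
  intro h
  rw [h, add_right_comm, ← two_mul] at hloop
  exact Nat.not_even_two_mul_add_one _ hloop

theorem Connected.dist_mem_of_adj (hconn : G.Connected) (hbip : G.Colorable 2) {u t : V}
    (hadj : G.Adj u t) (v : V) : G.dist v t ∈ ({G.dist v u + 1, G.dist v u - 1} : Set ℕ) := by
  rcases hadj.diff_dist_adj (u := v) with h | h | h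
  · exact absurd h (hconn.dist_ne_of_adj hbip hadj v)
  · exact .inl h
  · exact .inr h

theorem Connected.exists_adj_ne_dist_eq (hconn : G.Connected) (hbip : G.Colorable 2) {u : V}
    (hu : 2 < (G.neighborSet u).ncard) (v : V) :
    ∃ x ∈ G.neighborSet u, ∃ y ∈ G.neighborSet u, x ≠ y ∧ G.dist v x = G.dist v y :=
  Set.exists_ne_map_eq_of_ncard_lt_of_maps_to
    ((Set.ncard_insert_le _ _).trans_lt (by simpa using hu))
    (fun _ ht => hconn.dist_mem_of_adj hbip ht v)

theorem Connected.not_isResolving_of_subset_pair (hconn : G.Connected) (hbip : G.Colorable 2)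
    {u v : V} (hu : 2 < (G.neighborSet u).ncard) {W : Set V} (hW : W ⊆ {u, v}) :
    ¬IsResolving G W := by
  obtain ⟨x, hx, y, hy, hxy, hdist⟩ := hconn.exists_adj_ne_dist_eq hbip hu v
  refine fun hres => hxy (hres x y fun w hw => ?_)
  rcases hW hw with rfl | rfl
  · rw [dist_comm, dist_eq_one_iff_adj.mpr hx, dist_comm, dist_eq_one_iff_adj.mpr hy]
  · rw [dist_comm, hdist, dist_comm]

end SimpleGraph

theorem stmt_4 {V : Type*} [Fintype V] (G : SimpleGraph V) (hconn : G.Connected)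
    (hreg : ∀ v : V, (G.neighborSet v).ncard = 3) (hbip : G.Colorable 2) :
    3 ≤ metricDim G := by
  obtain ⟨W, hWcard, hres⟩ : metricDim G ∈ {n | ∃ W : Set V, W.ncard = n ∧ IsResolving G W} :=
    Nat.sInf_mem ⟨_, Set.univ, rfl, hconn.isResolving_univ⟩
  by_contra! hlt
  have := hconn.nonempty
  obtain ⟨u, v, hW⟩ := Set.exists_subset_pair_of_ncard_le_two W.toFinite (by omega)
  exact hconn.not_isResolving_of_subset_pair hbip (by rw [hreg u]; norm_num) hW hres
end

section
/- Let G be a connected graph with metric dimension 2 and let {u, v} be a resolving set (basis) for G. Then the degrees of u and v are each at most 3. -/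
open SimpleGraph

/-! All neighbours of `u` are at distance 1 from `u`, so a resolving pair `{u, v}` must separate
them by their distance to `v`. By the triangle inequality that distance lies in `{d - 1, d, d + 1}`,
where `d = dist u v`, so `u` has at most three neighbours. -/

namespace SimpleGraph

variable {V : Type*} (G : SimpleGraph V)

lemma dist_mem_Icc_of_adj {u w : V} (h : G.Adj u w) (v : V) :
    G.dist w v ∈ Set.Icc (G.dist u v - 1) (G.dist u v + 1) := by
  have hw : G.dist w v ≤ G.dist w u + G.dist u v := h.symm.reachable.dist_triangle_left v
  have hu : G.dist u v ≤ G.dist u w + G.dist w v := h.reachable.dist_triangle_left v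
  rw [G.dist_comm (u := w) (v := u), dist_eq_one_iff_adj.mpr h] at hw
  rw [dist_eq_one_iff_adj.mpr h] at hu
  constructor <;> omega

lemma injOn_dist_neighborSet_of_isResolving {u v : V} (hres : IsResolving G {u, v}) :
    Set.InjOn (G.dist · v) (G.neighborSet u) := by
  intro w₁ hw₁ w₂ hw₂ hdist
  apply hres
  rintro x (rfl | rfl)
  · rw [dist_comm, dist_eq_one_iff_adj.mpr hw₁, dist_comm, dist_eq_one_iff_adj.mpr hw₂]
  · exact hdist

lemma ncard_neighborSet_le_three_of_isResolving {u v : V} (hres : IsResolving G {u, v}) :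
    (G.neighborSet u).ncard ≤ 3 := calc
  (G.neighborSet u).ncard ≤ (Set.Icc (G.dist u v - 1) (G.dist u v + 1)).ncard :=
    Set.ncard_le_ncard_of_injOn _ (fun _ hw ↦ G.dist_mem_Icc_of_adj hw v)
      (G.injOn_dist_neighborSet_of_isResolving hres)
  _ ≤ 3 := by
    rw [Set.ncard_eq_toFinset_card', Set.toFinset_Icc, Nat.card_Icc]
    omega

end SimpleGraph

theorem stmt_5_general {V : Type*} (G : SimpleGraph V)
    (u v : V)
    (hres : IsResolving G {u, v}) :
    (G.neighborSet u).ncard ≤ 3 ∧ (G.neighborSet v).ncard ≤ 3 :=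
  ⟨G.ncard_neighborSet_le_three_of_isResolving hres,
    G.ncard_neighborSet_le_three_of_isResolving (Set.pair_comm u v ▸ hres)⟩

theorem stmt_5 {V : Type*} [Fintype V] (G : SimpleGraph V) (hconn : G.Connected)
    (u v : V) (huv : u ≠ v) (hdim : metricDim G = 2)
    (hres : IsResolving G {u, v}) :
    (G.neighborSet u).ncard ≤ 3 ∧ (G.neighborSet v).ncard ≤ 3 :=
  stmt_5_general G u v hres
end

section
/- Let G be a connected graph with metric dimension 2 and let {u, v} be a resolving set for G. Then there is a unique shortest path from u to v in G. -/
open SimpleGraph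

/-!
The `i`-th vertex `x` of a shortest `u`–`v` walk satisfies `d(u, x) = i` and `d(x, v) = d(u, v) - i`,
so its distance vector to `{u, v}` depends only on `i`. As `{u, v}` is resolving, this vector
determines `x`; hence all shortest `u`–`v` walks pass through the same vertices and coincide.
-/

namespace SimpleGraph.Walk

variable {V : Type*} {G : SimpleGraph V} {u v : V}

lemma dist_getVert_of_length_eq_dist (p : G.Walk u v) (hp : p.length = G.dist u v) (i : ℕ) :
    G.dist u (p.getVert i) = min i p.length ∧ G.dist (p.getVert i) v = p.length - i := by
  have hstart : G.dist u (p.getVert i) ≤ min i p.length :=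
    (dist_le (p.take i)).trans_eq (p.take_length i)
  have hend : G.dist (p.getVert i) v ≤ p.length - i :=
    (dist_le (p.drop i)).trans_eq (p.drop_length i)
  have htriangle : G.dist u v ≤ G.dist u (p.getVert i) + G.dist (p.getVert i) v :=
    (p.take i).reachable.dist_triangle_left v
  omega

lemma eq_of_length_eq_dist_of_isResolving (hres : IsResolving G {u, v}) {p q : G.Walk u v}
    (hp : p.length = G.dist u v) (hq : q.length = G.dist u v) : p = q := by
  refine ext_getVert fun i ↦ hres _ _ ?_
  obtain ⟨hpu, hpv⟩ := p.dist_getVert_of_length_eq_dist hp i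
  obtain ⟨hqu, hqv⟩ := q.dist_getVert_of_length_eq_dist hq i
  rintro w (rfl | rfl)
  · rw [dist_comm, hpu, dist_comm, hqu, hp, hq]
  · rw [hpv, hqv, hp, hq]

end SimpleGraph.Walk

theorem stmt_6_general {V : Type*} (G : SimpleGraph V) (hconn : G.Connected)
    (u v : V)
    (hres : IsResolving G {u, v}) :
    ∃! p : G.Walk u v, p.IsPath ∧ p.length = G.dist u v := by
  obtain ⟨p, hpath, hp⟩ := hconn.exists_path_of_dist u v
  exact ⟨p, ⟨hpath, hp⟩, fun q ⟨_, hq⟩ ↦ Walk.eq_of_length_eq_dist_of_isResolving hres hq hp⟩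

theorem stmt_6 {V : Type*} [Fintype V] (G : SimpleGraph V) (hconn : G.Connected)
    (u v : V) (huv : u ≠ v) (hdim : metricDim G = 2)
    (hres : IsResolving G {u, v}) :
    ∃! p : G.Walk u v, p.IsPath ∧ p.length = G.dist u v :=
  stmt_6_general G hconn u v hres
end

section
/- Let G be a connected graph with metric dimension 2, let {u, v} be a resolving set for G, and let P be a shortest path from u to v. Then every internal vertex of P has degree at most 5. -/
open SimpleGraph

/-!
The map `x ↦ (d(u, x), d(v, x))` is injective because `{u, v}` is resolving. Along a neighbour of
`w` each coordinate moves by at most one, the pair cannot stay `(d(u, w), d(v, w))` by injectivity,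
and since `w` lies on a geodesic from `u` to `v` the sum of the coordinates cannot drop below
`d(u, v) = d(u, w) + d(w, v)`. Of the eight remaining neighbouring lattice points only five survive.
-/

namespace SimpleGraph

variable {V : Type*} {G : SimpleGraph V} {u v w : V}

theorem _root_.IsResolving.injective_dist_pair (h : IsResolving G {u, v}) :
    Function.Injective fun x => (G.dist u x, G.dist v x) := by
  intro x y hxy
  simp only [Prod.mk.injEq] at hxy
  refine h x y fun z hz => ?_
  rcases hz with rfl | rfl
  · rw [dist_comm, hxy.1, dist_comm]
  · rw [dist_comm, hxy.2, dist_comm]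

theorem Walk.dist_add_dist_of_length_eq_dist [DecidableEq V] (p : G.Walk u v)
    (hp : p.length = G.dist u v) (hw : w ∈ p.support) : G.dist u w + G.dist w v = G.dist u v := by
  have hsplit : (p.takeUntil w hw).length + (p.dropUntil w hw).length = p.length := by
    rw [← Walk.length_append, p.take_spec hw]
  have hle := add_le_add (dist_le (p.takeUntil w hw)) (dist_le (p.dropUntil w hw))
  have hge := (p.takeUntil w hw).reachable.dist_triangle_left v
  omega

theorem ncard_neighborSet_le_five_of_isResolving (hres : IsResolving G {u, v})
    (hr : G.Reachable u w) (hw : G.dist u w + G.dist w v = G.dist u v) :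
    (G.neighborSet w).ncard ≤ 5 := by
  set a := G.dist u w
  set b := G.dist v w
  have hinj := hres.injective_dist_pair
  calc (G.neighborSet w).ncard
      ≤ (({(a - 1, b + 1), (a, b + 1), (a + 1, b - 1), (a + 1, b), (a + 1, b + 1)} :
          Finset (ℕ × ℕ)) : Set (ℕ × ℕ)).ncard := by
        refine Set.ncard_le_ncard_of_injOn _ (fun x (hx : G.Adj w x) => ?_) hinj.injOn
        have hne : (G.dist u x, G.dist v x) ≠ (a, b) := hinj.ne hx.ne'
        have hu := hx.diff_dist_adj (u := u)
        have hv := hx.diff_dist_adj (u := v)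
        have hgeo := (hr.trans hx.reachable).dist_triangle_left v
        rw [dist_comm (u := x)] at hgeo
        rw [dist_comm (u := w)] at hw
        simp only [Finset.coe_insert, Finset.coe_singleton, Set.mem_insert_iff,
          Set.mem_singleton_iff, Prod.mk.injEq, ne_eq] at hne ⊢
        omega
    _ ≤ 5 := by
        rw [Set.ncard_coe_finset]
        exact Finset.card_le_five

end SimpleGraph

theorem stmt_7_general {V : Type*} (G : SimpleGraph V)
    (u v : V)
    (hres : IsResolving G {u, v}) (P : G.Walk u v)
    (hshort : P.length = G.dist u v)
    (w : V) (hw : w ∈ P.support) :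
    (G.neighborSet w).ncard ≤ 5 := by
  classical
  exact ncard_neighborSet_le_five_of_isResolving hres (P.takeUntil w hw).reachable
    (P.dist_add_dist_of_length_eq_dist hshort hw)

theorem stmt_7 {V : Type*} [Fintype V] (G : SimpleGraph V) (hconn : G.Connected)
    (u v : V) (huv : u ≠ v) (hdim : metricDim G = 2)
    (hres : IsResolving G {u, v}) (P : G.Walk u v) (hP : P.IsPath)
    (hshort : P.length = G.dist u v)
    (w : V) (hw : w ∈ P.support) (hwu : w ≠ u) (hwv : w ≠ v) :
    (G.neighborSet w).ncard ≤ 5 :=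
  stmt_7_general G u v hres P hshort w hw
end

section
/- Let n be even and S = {a^{n/2}, a^i·b, a^j·b} ⊆ D_{2n} with gcd(i - j, n) = 1. Then the Cayley graph Cay(D_{2n}, S) is isomorphic to the Möbius ladder M_{2n}, i.e., the graph on the cycle C_{2n} with additional edges joining each pair of antipodal vertices. -/
open SimpleGraph

/-- The Möbius ladder on `2 * m` vertices: the cycle `C_{2m}` together with
edges joining each pair of antipodal vertices. -/
def mobiusLadder (m : ℕ) : SimpleGraph (ZMod (2 * m)) :=
  SimpleGraph.fromRel (fun x y => x - y = 1 ∨ x - y = (m : ZMod (2 * m)))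

/-!
Write `n = 2m`. For a unit `u` of `ZMod n`, `r k ↦ r (u k)`, `sr k ↦ sr (u k + b)` is an
automorphism of `D_{2n}`, and automorphisms carry Cayley graphs to Cayley graphs. Taking
`u = -(i - j)⁻¹` and `b = u i`, it fixes the central involution `r m` (a unit mod `2m` is odd)
and sends the connection set to `{r m, sr 0, sr (-1)}`.

For this normalised set, `φ (r k) = 2k`, `φ (sr k) = 2k + 1` (`toLadder`) is a bijection
`D_{2n} → ZMod (2n)` with `φ x - φ y = ± φ (x y⁻¹)`, and `φ` maps the connection set exactly onto
the steps `{1, -1, n}` of the Möbius ladder. Since these steps are closed under negation, `φ` is a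
graph isomorphism.
-/

section Cayley

variable {G H : Type*} [Group G] [Group H]

lemma cayley_adj_iff {S : Set G} (hS : ∀ s ∈ S, s⁻¹ ∈ S) (h1 : 1 ∉ S) (u v : G) :
    (cayley S).Adj u v ↔ u * v⁻¹ ∈ S := by
  refine ⟨fun ⟨_, h⟩ => h.elim id fun h => by simpa using hS _ h, fun h => ⟨?_, .inl h⟩⟩
  rintro rfl
  exact h1 (by simpa using h)

def cayleyIsoOfMulEquiv (σ : G ≃* H) {S : Set G} {T : Set H} (hST : σ '' S = T) :
    cayley S ≃g cayley T where
  toEquiv := σ.toEquiv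
  map_rel_iff' {u v} := by
    subst hST
    simp only [cayley, fromRel_adj, MulEquiv.toEquiv_eq_coe, MulEquiv.coe_toEquiv, ne_eq,
      EmbeddingLike.apply_eq_iff_eq, ← map_inv, ← map_mul, σ.injective.mem_set_image]

end Cayley

namespace ZMod

lemma natCast_add_self_eq_zero (m : ℕ) : (m : ZMod (2 * m)) + m = 0 := by
  rw [← two_mul]; exact_mod_cast natCast_self (2 * m)

lemma neg_natCast_eq_self (m : ℕ) : -(m : ZMod (2 * m)) = m :=
  neg_eq_of_add_eq_zero_left (natCast_add_self_eq_zero m)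

lemma natCast_half_ne_zero (m : ℕ) [NeZero m] : (m : ZMod (2 * m)) ≠ 0 := by
  rw [Ne, natCast_eq_zero_iff]
  exact fun h => absurd (Nat.le_of_dvd (NeZero.pos m) h) (by have := NeZero.pos m; omega)

lemma natCast_half_mul_unit (m : ℕ) [NeZero m] (u : (ZMod (2 * m))ˣ) :
    (m : ZMod (2 * m)) * u = m := by
  obtain ⟨k, hk⟩ : Odd (u : ZMod (2 * m)).val :=
    (Nat.Coprime.coprime_mul_right_right (val_coe_unit_coprime u)).odd_of_right
  rw [← natCast_zmod_val (u : ZMod (2 * m)), hk]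
  have : ((2 * m : ℕ) : ZMod (2 * m)) = 0 := natCast_self _
  push_cast at this ⊢
  linear_combination (k : ZMod (2 * m)) * this

def doubleHom (n : ℕ) : ZMod n →+ ZMod (2 * n) :=
  lift n ⟨2 • Int.castAddHom (ZMod (2 * n)), by
    simp [two_nsmul, ← two_mul]; exact_mod_cast natCast_self (2 * n)⟩

variable {n : ℕ}

lemma doubleHom_intCast (x : ℤ) : doubleHom n x = 2 * x := by
  simp [doubleHom, lift_coe, two_mul]

lemma doubleHom_natCast (x : ℕ) : doubleHom n x = 2 * x := by
  simpa using doubleHom_intCast (n := n) x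

@[simp] lemma doubleHom_one : doubleHom n 1 = 2 := by
  simpa using doubleHom_natCast (n := n) 1

lemma doubleHom_injective : Function.Injective (doubleHom n) := by
  refine (injective_iff_map_eq_zero _).mpr fun x hx => ?_
  obtain ⟨a, rfl⟩ := intCast_surjective x
  rw [doubleHom_intCast, ← Int.cast_two, ← Int.cast_mul, intCast_zmod_eq_zero_iff_dvd] at hx
  rw [intCast_zmod_eq_zero_iff_dvd]
  push_cast at hx
  exact (mul_dvd_mul_iff_left two_ne_zero).mp hx

lemma doubleHom_ne_add_one (x y : ZMod n) : doubleHom n x ≠ doubleHom n y + 1 := by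
  intro h
  obtain ⟨a, ha⟩ := intCast_surjective (x - y)
  have h1 : doubleHom n (x - y) = 1 := by rw [map_sub, h, add_sub_cancel_left]
  have h2 := congrArg (castHom (dvd_mul_right 2 n) (ZMod 2)) h1
  rw [← ha, doubleHom_intCast, map_mul, map_one, map_ofNat] at h2
  rw [show (2 : ZMod 2) = 0 from rfl, zero_mul] at h2
  exact zero_ne_one h2

end ZMod

def ladderSteps (m : ℕ) : Set (ZMod (2 * m)) := {1, -1, (m : ZMod (2 * m))}

lemma neg_mem_ladderSteps {m : ℕ} {x : ZMod (2 * m)} (hx : x ∈ ladderSteps m) :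
    -x ∈ ladderSteps m := by
  rcases hx with rfl | rfl | rfl <;> simp [ladderSteps, ZMod.neg_natCast_eq_self]

lemma mobiusLadder_adj_iff (m : ℕ) [NeZero m] (x y : ZMod (2 * m)) :
    (mobiusLadder m).Adj x y ↔ x - y ∈ ladderSteps m := by
  have : Fact (1 < 2 * m) := ⟨by have := NeZero.pos m; omega⟩
  have h0 : (0 : ZMod (2 * m)) ∉ ladderSteps m := by
    simp [ladderSteps, (ZMod.natCast_half_ne_zero m).symm]
  simp only [mobiusLadder, fromRel_adj, ← neg_sub x y]
  constructor
  · rintro ⟨-, (h | h) | (h | h)⟩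
    · simp [ladderSteps, h]
    · simp [ladderSteps, h]
    · simpa using neg_mem_ladderSteps (x := -(x - y)) (by simp [ladderSteps, h])
    · simpa using neg_mem_ladderSteps (x := -(x - y)) (by simp [ladderSteps, h])
  · intro h
    refine ⟨fun hxy => h0 (by rwa [hxy, sub_self] at h), ?_⟩
    rcases h with h | h | h
    exacts [.inl (.inl h), .inr (.inl (by rw [h, neg_neg])), .inl (.inr h)]

namespace DihedralGroup

variable {n : ℕ}

def affineAut (u : (ZMod n)ˣ) (b : ZMod n) : DihedralGroup n ≃* DihedralGroup n where
  toFun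
    | r k => r ((u : ZMod n) * k)
    | sr k => sr ((u : ZMod n) * k + b)
  invFun
    | r k => r (((u⁻¹ : (ZMod n)ˣ) : ZMod n) * k)
    | sr k => sr (((u⁻¹ : (ZMod n)ˣ) : ZMod n) * (k - b))
  left_inv := by rintro (k | k) <;> simp
  right_inv := by rintro (k | k) <;> simp
  map_mul' := by
    rintro (k | k) (l | l) <;> simp only [r_mul_r, r_mul_sr, sr_mul_r, sr_mul_sr] <;> ring_nf

@[simp] lemma affineAut_r (u : (ZMod n)ˣ) (b k : ZMod n) :
    affineAut u b (r k) = r ((u : ZMod n) * k) := rfl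

@[simp] lemma affineAut_sr (u : (ZMod n)ˣ) (b k : ZMod n) :
    affineAut u b (sr k) = sr ((u : ZMod n) * k + b) := rfl

def toLadder : DihedralGroup n → ZMod (2 * n)
  | r k => ZMod.doubleHom n k
  | sr k => ZMod.doubleHom n k + 1

lemma toLadder_bijective [NeZero n] : Function.Bijective (toLadder (n := n)) := by
  refine (Fintype.bijective_iff_injective_and_card _).mpr ⟨?_, by simp [card]⟩
  rintro (k | k) (l | l) h <;> simp only [toLadder, add_left_inj] at h
  · rw [ZMod.doubleHom_injective h]
  · exact absurd h (ZMod.doubleHom_ne_add_one _ _)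
  · exact absurd h.symm (ZMod.doubleHom_ne_add_one _ _)
  · rw [ZMod.doubleHom_injective h]

lemma toLadder_sub_eq_or_eq_neg (x y : DihedralGroup n) :
    toLadder x - toLadder y = toLadder (x * y⁻¹) ∨
      toLadder x - toLadder y = -toLadder (x * y⁻¹) := by
  rcases x with k | k <;> rcases y with l | l <;>
    simp only [toLadder, inv_r, inv_sr, r_mul_r, r_mul_sr, sr_mul_r, sr_mul_sr, map_add, map_sub,
      map_neg]
  exacts [.inl (by ring), .inr (by ring), .inl (by ring), .inr (by ring)]

def ladderGens (m : ℕ) : Set (DihedralGroup (2 * m)) := {r (m : ZMod (2 * m)), sr 0, sr (-1)}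

lemma inv_mem_ladderGens {m : ℕ} {s : DihedralGroup (2 * m)} (hs : s ∈ ladderGens m) :
    s⁻¹ ∈ ladderGens m := by
  rcases hs with rfl | rfl | rfl <;> simp [ladderGens, inv_r, inv_sr, ZMod.neg_natCast_eq_self]

lemma one_notMem_ladderGens (m : ℕ) [NeZero m] : 1 ∉ ladderGens m := by
  simp only [ladderGens, Set.mem_insert_iff, Set.mem_singleton_iff, one_def, r.injEq,
    reduceCtorEq, or_false]
  exact (ZMod.natCast_half_ne_zero m).symm

lemma toLadder_mem_ladderSteps_iff (m : ℕ) (g : DihedralGroup (2 * m)) :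
    toLadder g ∈ ladderSteps (2 * m) ↔ g ∈ ladderGens m := by
  have hN : ((2 * m : ℕ) : ZMod (2 * (2 * m))) = ZMod.doubleHom _ (m : ZMod (2 * m)) := by
    rw [ZMod.doubleHom_natCast]; push_cast; rfl
  have hneg : (-1 : ZMod (2 * (2 * m))) = ZMod.doubleHom _ (-1) + 1 := by
    rw [map_neg, ZMod.doubleHom_one]; ring
  simp only [ladderSteps, ladderGens, Set.mem_insert_iff, Set.mem_singleton_iff, hN]
  rcases g with a | a <;> simp only [toLadder]
  · have hne_one : ZMod.doubleHom _ a ≠ 1 := by simpa using ZMod.doubleHom_ne_add_one a 0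
    have hne_neg_one : ZMod.doubleHom _ a ≠ -1 := hneg ▸ ZMod.doubleHom_ne_add_one a (-1)
    simp [hne_one, hne_neg_one, ZMod.doubleHom_injective.eq_iff]
  · rw [hneg]
    simp only [add_eq_right, add_left_inj, (ZMod.doubleHom_ne_add_one _ _).symm,
      map_eq_zero_iff _ ZMod.doubleHom_injective, ZMod.doubleHom_injective.eq_iff, reduceCtorEq,
      sr.injEq, false_or, or_false]

noncomputable def cayleyLadderGensIsoMobiusLadder (m : ℕ) [NeZero m] :
    cayley (ladderGens m) ≃g mobiusLadder (2 * m) where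
  toEquiv := Equiv.ofBijective toLadder toLadder_bijective
  map_rel_iff' {x y} := by
    rw [Equiv.ofBijective_apply, Equiv.ofBijective_apply, mobiusLadder_adj_iff,
      cayley_adj_iff (fun _ => inv_mem_ladderGens) (one_notMem_ladderGens m),
      ← toLadder_mem_ladderSteps_iff]
    rcases toLadder_sub_eq_or_eq_neg x y with h | h <;> rw [h]
    exact ⟨fun h => by simpa using neg_mem_ladderSteps h, neg_mem_ladderSteps⟩

end DihedralGroup

open DihedralGroup

theorem stmt_15 (n : ℕ) (hn : 1 ≤ n) (hev : Even n) (i j : ℤ)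
    (hg : Int.gcd (i - j) (n : ℤ) = 1) :
    Nonempty (cayley
      ({A n ^ (n / 2), A n ^ i * B n, A n ^ j * B n} : Set (DihedralGroup n)) ≃g
      mobiusLadder n) := by
  obtain ⟨m, rfl⟩ := hev.two_dvd
  have : NeZero m := ⟨by omega⟩
  obtain ⟨u, hu⟩ : ∃ u : (ZMod (2 * m))ˣ, (u : ZMod (2 * m)) * (i - j) = -1 := by
    have hij : IsCoprime (i - j) (2 * m : ℕ) := Int.isCoprime_iff_gcd_eq_one.mpr hg
    refine ⟨-(ZMod.unitOfIsCoprime (i - j) hij)⁻¹, ?_⟩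
    rw [Units.val_neg, neg_mul, ← Int.cast_sub, ← ZMod.coe_unitOfIsCoprime _ hij, Units.inv_mul]
  have hS : affineAut u (u * i) '' {A (2 * m) ^ (2 * m / 2), A (2 * m) ^ i * B (2 * m),
      A (2 * m) ^ j * B (2 * m)} = ladderGens m := by
    simp only [Set.image_insert_eq, Set.image_singleton, A, B, r_one_pow, r_one_zpow, r_mul_sr,
      affineAut_r, affineAut_sr, Nat.mul_div_cancel_left m two_pos, mul_comm (u : ZMod (2 * m)) m,
      ZMod.natCast_half_mul_unit, ladderGens]
    rw [show (u : ZMod (2 * m)) * (0 - i) + u * i = 0 by ring,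
      show (u : ZMod (2 * m)) * (0 - j) + u * i = -1 by linear_combination hu]
  exact ⟨(cayleyIsoOfMulEquiv _ hS).trans (cayleyLadderGensIsoMobiusLadder m)⟩
end
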